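/- Let n ∈ {2,3,4}, let M be an n-connected binary matroid with |E(M)| ≥ 2n-2, and let T ⊆ E(M) with |T| = n-1. If every cocircuit Q of M containing T satisfies |Q| ≥ 2n-2, then M'_T is n-connected. -/

import Mathlib

open Set

variable {α : Type*}

/-- The rank of a set `X` in a matroid `M`: the maximum size of an independent subset of `X`. -/
noncomputable def mrank (M : Matroid α) (X : Set α) : ℕ :=
  sSup {n | ∃ I, M.Indep I ∧ I ⊆ X ∧ I.ncard = n}

/-- `(A, B)` is a `k`-separation of `M`: a partition of the ground set with both sides of
size at least `k` and `r(A) + r(B) - r(M) ≤ k - 1` (written additively). -/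
def IsKSeparation (M : Matroid α) (k : ℕ) (A B : Set α) : Prop :=
  A ∪ B = M.E ∧ Disjoint A B ∧ k ≤ A.ncard ∧ k ≤ B.ncard ∧
    mrank M A + mrank M B + 1 ≤ mrank M M.E + k

/-- `M` is `n`-connected if it has no `k`-separation for any `k < n`. -/
def NConnected (M : Matroid α) (n : ℕ) : Prop :=
  ∀ k A B, 1 ≤ k → k < n → ¬ IsKSeparation M k A B

/-- A circuit is a minimal dependent set. -/
def MCircuit (M : Matroid α) (C : Set α) : Prop := Minimal M.Dep C

/-- A cocircuit is a circuit of the dual matroid. -/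
def MCocircuit (M : Matroid α) (C : Set α) : Prop := MCircuit M✶ C

/-- A loop is a dependent singleton. -/
def MLoop (M : Matroid α) (e : α) : Prop := M.Dep {e}

/-- A coloop is a loop of the dual, i.e. an element lying in every base. -/
def MColoop (M : Matroid α) (e : α) : Prop := M✶.Dep {e}

/-- `M` is the vector matroid of the family of vectors `φ` over `GF(2)`:
a set is independent iff it lies in the ground set and the corresponding
vectors are linearly independent. -/
def IsRep {W : Type*} [AddCommGroup W] [Module (ZMod 2) W] (M : Matroid α) (φ : α → W) : Prop :=
  ∀ I : Set α, M.Indep I ↔ I ⊆ M.E ∧ LinearIndependent (ZMod 2) (I.restrict φ)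

open scoped Classical in
/-- The columns of the element splitting matrix `A'_T`: each original column gets an extra
coordinate (the new row), equal to `1` exactly on the columns labelled by `T`, and a new
column `a` which is `1` in the new row and `0` elsewhere. -/
noncomputable def splitRep {W : Type*} [AddCommGroup W] [Module (ZMod 2) W]
    (φ : α → W) (T : Set α) (a : α) : α → W × ZMod 2 :=
  fun x => if x = a then (0, 1) else (φ x, if x ∈ T then 1 else 0)

/-- `N` is the element splitting matroid `M'_T` of the binary matroid `M` (represented by `φ`)
with respect to `T`, with new element `a`. -/
def IsEleSplit {W : Type*} [AddCommGroup W] [Module (ZMod 2) W]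
    (M : Matroid α) (φ : α → W) (T : Set α) (a : α) (N : Matroid α) : Prop :=
  a ∉ M.E ∧ N.E = insert a M.E ∧ IsRep N (splitRep φ T a)

/-- `M` is the contraction `N / a` of the single element `a` from `N`. -/
def ContractElemEq (N : Matroid α) (a : α) (M : Matroid α) : Prop :=
  M.E = N.E \ {a} ∧ ∀ I : Set α,
    M.Indep I ↔ a ∉ I ∧
      ((N.Indep {a} ∧ N.Indep (insert a I)) ∨ (¬ N.Indep {a} ∧ N.Indep I))

/-!
Let `(A, B)` be a `k`-separation of `N = M'_T` with `k < n` and `a ∈ A`. Contracting `a` from `N`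
gives back `M`, so `r_N (A) = r_M (A - a) + 1`, `r_N (B) ≥ r_M (B)` and `r(N) = r(M) + 1`; hence if
`|A - a| ≥ k` then `(A - a, B)` is a `k`-separation of `M`. Otherwise `|A - a| = k - 1 < n - 1`, so
`A - a` is independent and `B` spans `M` (a cocircuit inside `A - a` would be too small). The
separation inequality then forces `r_N (B) = r_M (B)`: on `B` the new row is a linear combination of
the old ones, i.e. some cocycle `D` of `M` meets `B` exactly in `T ∩ B`. Then `|D| ≤ 2n - 3 < 2n`,
and since `M` is binary and all cocircuits have at least `n` elements, `D` is a single cocircuit.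
If `T ⊆ D` this contradicts `|D| ≥ 2n - 2`; otherwise some element of `T` lies in `(A - a) \ D`, so
`|D| ≤ 2n - 5 < n` as `n ≤ 4`.
-/

open Submodule Module Matroid

section LinearAlgebra

variable {K V ι : Type*} [Field K] [AddCommGroup V] [Module K V]

lemma LinearIndepOn.finrank_span_image {v : ι → V} {s : Set ι} (h : LinearIndepOn K v s)
    (hs : s.Finite) : finrank K (span K (v '' s)) = s.ncard := by
  have := hs.fintype
  rw [image_eq_range, finrank_span_eq_card h, ← Nat.card_eq_fintype_card, Nat.card_coe_set_eq]

lemma Submodule.finrank_prod_top (p : Submodule K V) [FiniteDimensional K p] :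
    finrank K (p.prod (⊤ : Submodule K K)) = finrank K p + 1 := by
  have hinj : Function.Injective (p.subtype.prodMap (LinearMap.id : K →ₗ[K] K)) :=
    Prod.map_injective.2 ⟨p.injective_subtype, Function.injective_id⟩
  rw [← range_subtype p, ← LinearMap.range_id, ← LinearMap.range_prodMap,
    LinearMap.finrank_range_of_inj hinj, Module.finrank_prod, range_subtype, finrank_self]

lemma Submodule.exists_le_graph_of_finrank_le {V' : Type*} [AddCommGroup V'] [Module K V']
    (p : Submodule K (V × V')) [FiniteDimensional K p]
    (h : finrank K p ≤ finrank K (p.map (LinearMap.fst K V V'))) :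
    ∃ g : V →ₗ[K] V', p ≤ g.graph := by
  set F := LinearMap.fst K V V' ∘ₗ p.subtype
  have hrange : LinearMap.range F = p.map (LinearMap.fst K V V') := by
    rw [LinearMap.range_comp, range_subtype]
  have hker : LinearMap.ker F = ⊥ := by
    have := F.finrank_range_add_finrank_ker
    rw [hrange] at this
    rw [← finrank_eq_zero]
    omega
  obtain ⟨G, hG⟩ := F.exists_leftInverse_of_injective hker
  refine ⟨LinearMap.snd K V V' ∘ₗ p.subtype ∘ₗ G, fun v hv => ?_⟩
  have hGv : G v.1 = ⟨v, hv⟩ := LinearMap.congr_fun hG ⟨v, hv⟩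
  simp [LinearMap.mem_graph_iff, hGv]

end LinearAlgebra

lemma Submodule.span_image_le_ker {R V V' ι : Type*} [Semiring R] [AddCommMonoid V] [Module R V]
    [AddCommMonoid V'] [Module R V'] {v : ι → V} {s : Set ι} {g : V →ₗ[R] V'}
    (h : ∀ x ∈ s, g (v x) = 0) : span R (v '' s) ≤ LinearMap.ker g :=
  span_le.2 (by rintro _ ⟨x, hx, rfl⟩; exact h x hx)

namespace Matroid

variable {M : Matroid α} {X Y Q : Set α}

lemma cast_mrank [M.RankFinite] (X : Set α) : (mrank M X : ℕ∞) = M.eRk X := by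
  obtain ⟨I, hI⟩ := M.exists_isBasis' X
  have hIfin := hI.indep.finite
  rw [hI.eRk_eq_encard, ← hIfin.cast_ncard_eq, mrank, Nat.cast_inj]
  refine IsGreatest.csSup_eq ⟨⟨I, hI.indep, hI.subset, rfl⟩, ?_⟩
  rintro _ ⟨J, hJ, hJX, rfl⟩
  have := hJ.encard_le_eRk_of_subset hJX
  rwa [hI.eRk_eq_encard, ← hIfin.cast_ncard_eq, ← hJ.finite.cast_ncard_eq, Nat.cast_le] at this

lemma mrank_mono [M.RankFinite] (h : X ⊆ Y) : mrank M X ≤ mrank M Y := by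
  have := M.eRk_mono h
  rwa [← cast_mrank, ← cast_mrank, Nat.cast_le] at this

lemma mrank_le_ncard [M.RankFinite] (hX : X.Finite) : mrank M X ≤ X.ncard := by
  have := M.eRk_le_encard X
  rwa [← cast_mrank, ← hX.cast_ncard_eq, Nat.cast_le] at this

lemma Indep.mrank_eq_ncard [M.RankFinite] (hI : M.Indep X) : mrank M X = X.ncard := by
  have := hI.eRk_eq_encard
  rwa [← cast_mrank, ← hI.finite.cast_ncard_eq, Nat.cast_inj] at this

lemma Dep.mrank_lt_ncard [M.RankFinite] (hX : M.Dep X) (hXfin : X.Finite) :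
    mrank M X < X.ncard := by
  have := eRk_lt_encard_of_dep_of_finite hXfin hX
  rwa [← cast_mrank, ← hXfin.cast_ncard_eq, Nat.cast_lt] at this

lemma spanning_iff_mrank_le [M.RankFinite] (hX : X ⊆ M.E) :
    M.Spanning X ↔ mrank M M.E ≤ mrank M X := by
  rw [spanning_iff_eRk_le hX, ← eRk_ground, ← cast_mrank, ← cast_mrank, Nat.cast_le]

lemma exists_isCocircuit_subset_sdiff (hX : X ⊆ M.E) (h : ¬ M.Spanning X) :
    ∃ Q, M.IsCocircuit Q ∧ Q ⊆ M.E \ X := by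
  by_contra! hQ
  have : M.Coindep (M.E \ X) := coindep_iff_forall_subset_not_isCocircuit.2
    ⟨fun Q hQX hQc => hQ Q hQc hQX, sdiff_subset⟩
  rw [coindep_iff_compl_spanning sdiff_subset, sdiff_sdiff_cancel_left hX] at this
  exact h this

lemma IsCocircuit.not_spanning_compl (hQ : M.IsCocircuit Q) : ¬ M.Spanning (M.E \ Q) :=
  (isCocircuit_iff_minimal_compl_nonspanning.1 hQ).prop

lemma IsCocircuit.spanning_compl_sdiff_singleton (hQ : M.IsCocircuit Q) {x : α} (hx : x ∈ Q) :
    M.Spanning (M.E \ (Q \ {x})) := by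
  by_contra h
  exact (isCocircuit_iff_minimal_compl_nonspanning.1 hQ).not_prop_of_ssubset
    (sdiff_singleton_ssubset.2 hx) h

end Matroid

lemma IsKSeparation.symm {M : Matroid α} {k : ℕ} {A B : Set α} (h : IsKSeparation M k A B) :
    IsKSeparation M k B A := by
  obtain ⟨hE, hdisj, hA, hB, hr⟩ := h
  exact ⟨union_comm A B ▸ hE, hdisj.symm, hB, hA, by omega⟩

namespace NConnected

variable {M : Matroid α} [M.Finite] {n : ℕ} {X Q : Set α}

lemma lt_mrank_add_mrank_compl (hconn : NConnected M n) (hcard : 2 * n - 2 ≤ M.E.ncard)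
    (hX : X ⊆ M.E) (hXne : X.Nonempty) (hXn : X.ncard < n) :
    mrank M M.E + X.ncard < mrank M X + mrank M (M.E \ X) + 1 := by
  by_contra! h
  have hXfin : X.Finite := M.ground_finite.subset hX
  have hcompl : (M.E \ X).ncard = M.E.ncard - X.ncard := ncard_sdiff hX hXfin
  exact hconn X.ncard X (M.E \ X) ((ncard_pos hXfin).2 hXne) hXn
    ⟨union_sdiff_cancel hX, disjoint_sdiff_right, le_rfl, by omega, h⟩

lemma indep_of_ncard_lt (hconn : NConnected M n) (hcard : 2 * n - 2 ≤ M.E.ncard)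
    (hX : X ⊆ M.E) (hXn : X.ncard < n) : M.Indep X := by
  by_contra hX_indep
  have hXdep : M.Dep X := ⟨hX_indep, hX⟩
  have h1 := hXdep.mrank_lt_ncard (M.ground_finite.subset hX)
  have h2 := mrank_mono (M := M) (sdiff_subset : M.E \ X ⊆ M.E)
  have := hconn.lt_mrank_add_mrank_compl hcard hX hXdep.nonempty hXn
  omega

lemma le_ncard_of_isCocircuit (hconn : NConnected M n) (hcard : 2 * n - 2 ≤ M.E.ncard)
    (hQ : M.IsCocircuit Q) : n ≤ Q.ncard := by
  by_contra! hQn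
  have h1 := mrank_le_ncard (M := M) (M.ground_finite.subset hQ.subset_ground)
  have h2 : mrank M (M.E \ Q) < mrank M M.E := by
    rw [← not_le, ← spanning_iff_mrank_le sdiff_subset]
    exact hQ.not_spanning_compl
  have := hconn.lt_mrank_add_mrank_compl hcard hQ.subset_ground hQ.nonempty hQn
  omega

end NConnected

section Cocycle

variable {W : Type*} [AddCommGroup W] [Module (ZMod 2) W]

/-- For a binary representation `φ` of `M`, these sets are exactly the disjoint unions of
cocircuits of `M`. -/
def cocycle (M : Matroid α) (φ : α → W) (g : W →ₗ[ZMod 2] ZMod 2) : Set α :=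
  {x ∈ M.E | g (φ x) ≠ 0}

lemma cocycle_add {M : Matroid α} {φ : α → W} (f g : W →ₗ[ZMod 2] ZMod 2) :
    cocycle M φ (f + g) = symmDiff (cocycle M φ f) (cocycle M φ g) := by
  ext x
  by_cases hx : x ∈ M.E
  · simp only [cocycle, mem_symmDiff, mem_ofPred_eq, LinearMap.add_apply, hx, true_and, not_not]
    generalize f (φ x) = s
    generalize g (φ x) = t
    revert s t
    decide
  · simp [cocycle, mem_symmDiff, hx]

namespace IsRep

variable {M : Matroid α} [M.Finite] {φ : α → W} {X Q : Set α}

lemma mrank_eq_finrank (hM : IsRep M φ) (hX : X ⊆ M.E) :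
    mrank M X = finrank (ZMod 2) (span (ZMod 2) (φ '' X)) := by
  obtain ⟨b, hbX, -, hXb, hb⟩ :=
    exists_linearIndepOn_extension (linearIndepOn_empty (ZMod 2) φ) (empty_subset X)
  have hspan : span (ZMod 2) (φ '' b) = span (ZMod 2) (φ '' X) :=
    le_antisymm (span_mono (image_mono hbX)) (span_le.2 hXb)
  have hbfin : b.Finite := M.ground_finite.subset (hbX.trans hX)
  have : FiniteDimensional (ZMod 2) (span (ZMod 2) (φ '' X)) :=
    hspan ▸ FiniteDimensional.span_of_finite _ (hbfin.image φ)
  refine IsGreatest.csSup_eq ⟨⟨b, (hM b).2 ⟨hbX.trans hX, hb⟩, hbX, ?_⟩, ?_⟩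
  · rw [← hspan, hb.finrank_span_image hbfin]
  · rintro _ ⟨I, hI, hIX, rfl⟩
    rw [← LinearIndepOn.finrank_span_image ((hM I).1 hI).2
      (M.ground_finite.subset hI.subset_ground)]
    exact finrank_mono (span_mono (image_mono hIX))

lemma spanning_iff (hM : IsRep M φ) (hX : X ⊆ M.E) :
    M.Spanning X ↔ φ '' M.E ⊆ span (ZMod 2) (φ '' X) := by
  have : FiniteDimensional (ZMod 2) (span (ZMod 2) (φ '' X)) :=
    FiniteDimensional.span_of_finite _ ((M.ground_finite.subset hX).image φ)
  have : FiniteDimensional (ZMod 2) (span (ZMod 2) (φ '' M.E)) :=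
    FiniteDimensional.span_of_finite _ (M.ground_finite.image φ)
  rw [spanning_iff_mrank_le hX, hM.mrank_eq_finrank hX, hM.mrank_eq_finrank subset_rfl, ← span_le]
  constructor
  · intro h
    exact (eq_of_le_of_finrank_le (span_mono (image_mono hX)) h).ge
  · intro h
    exact finrank_mono h

lemma exists_cocycle_eq (hM : IsRep M φ) (hQ : M.IsCocircuit Q) :
    ∃ g, cocycle M φ g = Q := by
  obtain ⟨x₀, hx₀E, hx₀⟩ : ∃ x₀ ∈ M.E, φ x₀ ∉ span (ZMod 2) (φ '' (M.E \ Q)) := by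
    have := hQ.not_spanning_compl
    rw [hM.spanning_iff sdiff_subset, image_subset_iff, not_subset] at this
    exact this
  obtain ⟨g, hgx₀, hg⟩ := exists_dual_map_eq_bot_of_notMem hx₀ inferInstance
  have hvanish : ∀ x ∈ M.E \ Q, g (φ x) = 0 := fun x hx =>
    LinearMap.le_ker_iff_map.2 hg (subset_span (mem_image_of_mem φ hx))
  refine ⟨g, Subset.antisymm (fun x hx => ?_) fun x hxQ => ⟨hQ.subset_ground hxQ, fun hgx => ?_⟩⟩
  · by_contra hxQ
    exact hx.2 (hvanish x ⟨hx.1, hxQ⟩)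
  · -- `M.E \ (Q \ {x})` spans `M` but `g ∘ φ` would vanish on it
    refine hgx₀ (span_image_le_ker (fun y hy => ?_)
      ((hM.spanning_iff sdiff_subset).1 (hQ.spanning_compl_sdiff_singleton hxQ)
        (mem_image_of_mem φ hx₀E)))
    by_cases hyQ : y ∈ Q
    · obtain rfl : y = x := by simpa [hyQ] using hy.2
      exact hgx
    · exact hvanish y ⟨hy.1, hyQ⟩

lemma exists_isCocircuit_subset_cocycle (hM : IsRep M φ) {g : W →ₗ[ZMod 2] ZMod 2}
    (hne : (cocycle M φ g).Nonempty) : ∃ Q, M.IsCocircuit Q ∧ Q ⊆ cocycle M φ g := by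
  obtain ⟨x₀, hx₀E, hx₀⟩ := hne
  have hnsp : ¬ M.Spanning (M.E \ cocycle M φ g) := by
    rw [hM.spanning_iff sdiff_subset]
    intro h
    refine hx₀ (span_image_le_ker (fun y hy => ?_) (h (mem_image_of_mem φ hx₀E)))
    by_contra hgy
    exact hy.2 ⟨hy.1, hgy⟩
  obtain ⟨Q, hQ, hQsub⟩ := exists_isCocircuit_subset_sdiff sdiff_subset hnsp
  exact ⟨Q, hQ, hQsub.trans (sdiff_sdiff_cancel_left fun x hx => hx.1).subset⟩

lemma isCocircuit_cocycle_of_ncard_lt (hM : IsRep M φ) {n : ℕ}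
    (hmin : ∀ Q, M.IsCocircuit Q → n ≤ Q.ncard) {g : W →ₗ[ZMod 2] ZMod 2}
    (hne : (cocycle M φ g).Nonempty) (hsize : (cocycle M φ g).ncard < 2 * n) :
    M.IsCocircuit (cocycle M φ g) := by
  obtain ⟨Q, hQ, hQD⟩ := hM.exists_isCocircuit_subset_cocycle hne
  obtain ⟨h, rfl⟩ := hM.exists_cocycle_eq hQ
  suffices hD : cocycle M φ g \ cocycle M φ h = ∅ by
    rwa [(sdiff_eq_empty.1 hD).antisymm hQD]
  -- otherwise the cocycle `D \ Q` contains a second cocircuit, disjoint from `Q`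
  by_contra hne'
  have hgh : cocycle M φ (g + h) = cocycle M φ g \ cocycle M φ h := by
    rw [cocycle_add, symmDiff_of_ge hQD]
  obtain ⟨Q', hQ', hQ'sub⟩ :=
    hM.exists_isCocircuit_subset_cocycle (hgh ▸ nonempty_iff_ne_empty.2 hne')
  rw [hgh] at hQ'sub
  have hDfin : (cocycle M φ g).Finite := M.ground_finite.subset fun x hx => hx.1
  have hunion := ncard_le_ncard (union_subset hQD (hQ'sub.trans sdiff_subset)) hDfin
  rw [ncard_union_eq (disjoint_of_subset_right hQ'sub disjoint_sdiff_right)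
    (hDfin.subset hQD) (hDfin.subset (hQ'sub.trans sdiff_subset))] at hunion
  have := hmin _ hQ
  have := hmin _ hQ'
  omega

lemma cocycle_inter_ne_inter (hM : IsRep M φ) {n : ℕ} (hn : n ≤ 4)
    (hmin : ∀ Q, M.IsCocircuit Q → n ≤ Q.ncard)
    {T : Set α} (hTmin : ∀ Q, M.IsCocircuit Q → T ⊆ Q → 2 * n - 2 ≤ Q.ncard)
    (hT : T ⊆ M.E) (hTcard : T.ncard = n - 1) {B : Set α} (hB : (M.E \ B).ncard + 2 ≤ n)
    (g : W →ₗ[ZMod 2] ZMod 2) : cocycle M φ g ∩ B ≠ T ∩ B := by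
  intro hDB
  set D := cocycle M φ g
  have hDE : D ⊆ M.E := fun x hx => hx.1
  have hfin := M.ground_finite
  have hD := ncard_inter_add_ncard_sdiff_eq_ncard D B (hfin.subset hDE)
  have hT' := ncard_inter_add_ncard_sdiff_eq_ncard T B (hfin.subset hT)
  have hDB' := ncard_le_ncard (sdiff_subset_sdiff_left hDE : D \ B ⊆ M.E \ B) hfin.sdiff
  have hTB' := ncard_le_ncard (sdiff_subset_sdiff_left hT : T \ B ⊆ M.E \ B) hfin.sdiff
  rw [hDB] at hD
  have hDne : D.Nonempty := by
    obtain ⟨x, hx⟩ := (ncard_pos ((hfin.subset hT).inter_of_left B)).1 (by omega)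
    exact ⟨x, (hDB.ge hx).1⟩
  have hDcoc := hM.isCocircuit_cocycle_of_ncard_lt hmin hDne (show D.ncard < 2 * n by omega)
  have hDn := hmin D hDcoc
  by_cases hTD : T ⊆ D
  · have := hTmin D hDcoc hTD
    omega
  · obtain ⟨t, htT, htD⟩ := not_subset.1 hTD
    have htB : t ∉ B := fun htB => htD (hDB.ge (mem_inter htT htB)).1
    have hDt : D \ B ⊆ (M.E \ B) \ {t} := fun x hx =>
      ⟨⟨hDE hx.1, hx.2⟩, fun hxt => htD ((mem_singleton_iff.1 hxt) ▸ hx.1)⟩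
    have h1 := ncard_le_ncard hDt hfin.sdiff.sdiff
    rw [ncard_sdiff_singleton_of_mem (show t ∈ M.E \ B from ⟨hT htT, htB⟩)] at h1
    have h2 := (ncard_pos ((hfin.subset hT).sdiff (t := B))).2 ⟨t, htT, htB⟩
    omega

end IsRep

end Cocycle

section ElementSplitting

variable {W : Type*} [AddCommGroup W] [Module (ZMod 2) W] {φ : α → W} {T X : Set α} {a x : α}

open scoped Classical in
lemma splitRep_of_ne (hx : x ≠ a) :
    splitRep φ T a x = (φ x, if x ∈ T then 1 else 0) := by
  simp [splitRep, hx]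

lemma splitRep_self : splitRep φ T a a = (0, 1) := by
  simp [splitRep]

lemma map_fst_span_splitRep (haX : a ∉ X) :
    (span (ZMod 2) (splitRep φ T a '' X)).map (LinearMap.fst (ZMod 2) W (ZMod 2)) =
      span (ZMod 2) (φ '' X) := by
  rw [map_span, image_image]
  refine congrArg _ (image_congr fun x hx => ?_)
  simp [splitRep_of_ne (ne_of_mem_of_not_mem hx haX)]

lemma span_splitRep_insert (haX : a ∉ X) :
    span (ZMod 2) (splitRep φ T a '' insert a X) = (span (ZMod 2) (φ '' X)).prod ⊤ := by
  refine le_antisymm (span_le.2 ?_) fun v hv => ?_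
  · rintro _ ⟨x, hx, rfl⟩
    rcases eq_or_ne x a with rfl | hxa
    · simp [splitRep_self]
    · rw [splitRep_of_ne hxa]
      exact ⟨subset_span (mem_image_of_mem φ (hx.resolve_left hxa)), trivial⟩
  · obtain ⟨w, hw, hwv⟩ := (map_fst_span_splitRep (T := T) haX).ge hv.1
    have hv_eq : v = w + (v.2 - w.2) • splitRep φ T a a := by
      ext <;> simp [splitRep_self, ← hwv]
    rw [hv_eq]
    exact add_mem (span_mono (image_mono (subset_insert a X)) hw)
      (smul_mem _ _ (subset_span (mem_image_of_mem _ (mem_insert a X))))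

namespace IsEleSplit

variable {M N : Matroid α} {A B : Set α} {k n : ℕ}

lemma subset_ground (hN : IsEleSplit M φ T a N) (hX : X ⊆ M.E) : X ⊆ N.E :=
  hN.2.1 ▸ hX.trans (subset_insert a M.E)

lemma sdiff_union_eq (hN : IsEleSplit M φ T a N) (hAB : A ∪ B = N.E) (hdisj : Disjoint A B)
    (haA : a ∈ A) : A \ {a} ∪ B = M.E := by
  have haB : a ∉ B := disjoint_left.1 hdisj haA
  have hME : M.E = N.E \ {a} := by
    rw [hN.2.1, insert_sdiff_of_mem _ (mem_singleton a), sdiff_singleton_eq_self hN.1]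
  rw [hME, ← hAB, union_sdiff_distrib, sdiff_singleton_eq_self haB]

variable [M.Finite]

lemma finite (hN : IsEleSplit M φ T a N) : N.Finite :=
  ⟨hN.2.1 ▸ M.ground_finite.insert a⟩

lemma mrank_le (hM : IsRep M φ) (hN : IsEleSplit M φ T a N) (hX : X ⊆ M.E) :
    mrank M X ≤ mrank N X := by
  have := hN.finite
  have : FiniteDimensional (ZMod 2) (span (ZMod 2) (splitRep φ T a '' X)) :=
    FiniteDimensional.span_of_finite _ ((M.ground_finite.subset hX).image _)
  rw [hM.mrank_eq_finrank hX, hN.2.2.mrank_eq_finrank (hN.subset_ground hX),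
    ← map_fst_span_splitRep fun haX => hN.1 (hX haX)]
  exact finrank_map_le _ _

lemma mrank_insert (hM : IsRep M φ) (hN : IsEleSplit M φ T a N) (hX : X ⊆ M.E) :
    mrank N (insert a X) = mrank M X + 1 := by
  have := hN.finite
  have : FiniteDimensional (ZMod 2) (span (ZMod 2) (φ '' X)) :=
    FiniteDimensional.span_of_finite _ ((M.ground_finite.subset hX).image φ)
  rw [hN.2.2.mrank_eq_finrank (hN.2.1 ▸ insert_subset_insert hX),
    span_splitRep_insert fun haX => hN.1 (hX haX), finrank_prod_top, hM.mrank_eq_finrank hX]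

lemma mrank_ground (hM : IsRep M φ) (hN : IsEleSplit M φ T a N) :
    mrank N N.E = mrank M M.E + 1 := by
  rw [hN.2.1, hN.mrank_insert hM subset_rfl]

lemma exists_cocycle_inter_eq (hM : IsRep M φ) (hN : IsEleSplit M φ T a N) (hX : X ⊆ M.E)
    (h : mrank N X ≤ mrank M X) : ∃ g, cocycle M φ g ∩ X = T ∩ X := by
  have := hN.finite
  have haX : a ∉ X := fun haX => hN.1 (hX haX)
  set p := span (ZMod 2) (splitRep φ T a '' X)
  have : FiniteDimensional (ZMod 2) p :=
    FiniteDimensional.span_of_finite _ ((M.ground_finite.subset hX).image _)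
  rw [hM.mrank_eq_finrank hX, hN.2.2.mrank_eq_finrank (hN.subset_ground hX),
    ← map_fst_span_splitRep (φ := φ) (T := T) haX] at h
  obtain ⟨g, hg⟩ := p.exists_le_graph_of_finrank_le h
  refine ⟨g, ext fun x => and_congr_left fun hx => ?_⟩
  have hgx := hg (subset_span (mem_image_of_mem _ hx))
  classical
  rw [LinearMap.mem_graph_iff, splitRep_of_ne (ne_of_mem_of_not_mem hx haX)] at hgx
  by_cases hxT : x ∈ T <;> simp [cocycle, hX hx, hxT, ← hgx]

lemma isKSeparation_sdiff (hM : IsRep M φ) (hN : IsEleSplit M φ T a N)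
    (hsep : IsKSeparation N k A B) (haA : a ∈ A) (hk : k ≤ (A \ {a}).ncard) :
    IsKSeparation M k (A \ {a}) B := by
  obtain ⟨hAB, hdisj, -, hBk, hr⟩ := hsep
  have hE := hN.sdiff_union_eq hAB hdisj haA
  have hA := hN.mrank_insert hM (hE ▸ subset_union_left : A \ {a} ⊆ M.E)
  rw [insert_sdiff_singleton, insert_eq_of_mem haA] at hA
  have hB := hN.mrank_le hM (hE ▸ subset_union_right : B ⊆ M.E)
  have hground := hN.mrank_ground hM
  exact ⟨hE, hdisj.mono_left sdiff_subset, hk, hBk, by omega⟩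

lemma not_isKSeparation_of_ncard_sdiff_lt (hM : IsRep M φ) (hN : IsEleSplit M φ T a N)
    (hn : n ≤ 4) (hcard : 2 * n - 2 ≤ M.E.ncard) (hconn : NConnected M n) (hT : T ⊆ M.E)
    (hTcard : T.ncard = n - 1) (hTmin : ∀ Q, M.IsCocircuit Q → T ⊆ Q → 2 * n - 2 ≤ Q.ncard)
    (hkn : k < n) (haA : a ∈ A) (hk : (A \ {a}).ncard < k) : ¬ IsKSeparation N k A B := by
  intro hsep
  obtain ⟨hAB, hdisj, hAk, -, hr⟩ := hsep
  have hE := hN.sdiff_union_eq hAB hdisj haA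
  have hA'E : A \ {a} ⊆ M.E := hE ▸ subset_union_left
  have hBE : B ⊆ M.E := hE ▸ subset_union_right
  have hcompl : M.E \ B = A \ {a} := by
    rw [← hE, union_sdiff_right, (hdisj.mono_left sdiff_subset).sdiff_eq_left]
  have := hN.finite
  have hA : mrank N A = A.ncard := by
    rw [← ncard_sdiff_singleton_add_one haA (N.ground_finite.subset (hAB ▸ subset_union_left)),
      ← (hconn.indep_of_ncard_lt hcard hA'E (by omega)).mrank_eq_ncard,
      ← hN.mrank_insert hM hA'E, insert_sdiff_singleton, insert_eq_of_mem haA]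
  have hB : M.Spanning B := by
    by_contra hB
    obtain ⟨Q, hQ, hQB⟩ := exists_isCocircuit_subset_sdiff hBE hB
    have := hconn.le_ncard_of_isCocircuit hcard hQ
    have := ncard_le_ncard (hcompl ▸ hQB) (M.ground_finite.subset hA'E)
    omega
  have hrB := (spanning_iff_mrank_le hBE).1 hB
  have hground := hN.mrank_ground hM
  obtain ⟨g, hg⟩ := hN.exists_cocycle_inter_eq hM hBE (by omega)
  exact hM.cocycle_inter_ne_inter hn (fun Q hQ => hconn.le_ncard_of_isCocircuit hcard hQ) hTmin hT
    hTcard (by rw [hcompl]; omega) g hg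

end IsEleSplit

end ElementSplitting

/-- For n ∈ {2,3,4}: if every cocircuit Q of M containing T satisfies |Q| ≥ 2n - 2,
then M'_T is n-connected. -/
theorem eleSplit_nConnected_small_n {α W : Type*}
    [AddCommGroup W] [Module (ZMod 2) W]
    (n : ℕ) (hn : n ∈ ({2, 3, 4} : Set ℕ)) (M N : Matroid α) (φ : α → W) (hM : IsRep M φ)
    (hfin : M.E.Finite) (hcard : 2 * n - 2 ≤ M.E.ncard) (hconn : NConnected M n)
    (T : Set α) (hT : T ⊆ M.E) (hTcard : T.ncard = n - 1)
    (a : α) (hN : IsEleSplit M φ T a N)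
    (hQ : ∀ Q : Set α, MCocircuit M Q → T ⊆ Q → 2 * n - 2 ≤ Q.ncard) :
    NConnected N n := by
  have : M.Finite := ⟨hfin⟩
  have hn4 : n ≤ 4 := by
    simp only [mem_insert_iff, mem_singleton_iff] at hn
    omega
  intro k A B hk hkn hsep
  wlog haA : a ∈ A generalizing A B
  · have haB : a ∈ B := by
      have : a ∈ A ∪ B := hsep.1 ▸ hN.2.1 ▸ mem_insert a M.E
      exact this.resolve_left haA
    exact this B A hsep.symm haB
  by_cases hkA : k ≤ (A \ {a}).ncard
  · exact hconn k _ _ hk hkn (hN.isKSeparation_sdiff hM hsep haA hkA)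
  · exact hN.not_isKSeparation_of_ncard_sdiff_lt hM hn4 hcard hconn hT hTcard hQ hkn haA
      (not_le.1 hkA) hsep
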